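/- arXiv:1703.05106 — 5 statements merged into one kernel-verified Lean document; each statement's English description precedes it below -/
import Mathlib

section
/- Suppose G is strongly connected with diameter D and the counter dynamics y_i, z_i run alongside the consensus update x(k+1) = A x(k) with row-stochastic A consistent with G. If z_i(k) ≥ D + 1 for some node i, then the network was in uniformly local ε-consensus at time k − D − 1, and hence (by attractiveness of global consensus) attains global (εD)-consensus at time k. -/
open Finset

/-- A matrix is row-stochastic: nonnegative entries, each row sums to 1. -/
def RowStochastic {V : Type*} [Fintype V] (A : Matrix V V ℝ) : Prop :=
  (∀ i j, 0 ≤ A i j) ∧ ∀ i, ∑ j, A i j = 1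

/-- Ergodicity coefficient τ(A) = min_{i ≠ j} Σ_k min(a_{ik}, a_{jk}). -/
noncomputable def tau {V : Type*} [Fintype V] (A : Matrix V V ℝ) : ℝ :=
  sInf {s : ℝ | ∃ i j : V, i ≠ j ∧ s = ∑ k, min (A i k) (A j k)}

/-- Spread d(x) = max_i x_i - min_i x_i. -/
noncomputable def spread {V : Type*} [Fintype V] [Nonempty V] (x : V → ℝ) : ℝ :=
  Finset.univ.sup' Finset.univ_nonempty x - Finset.univ.inf' Finset.univ_nonempty x

/-- `HasPath E i j m`: a directed path of length `m` from `j` to `i`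
(information flows from `j` to `i`); `E i j` means `j` is an in-neighbor of `i`,
i.e., `(i,j) ∈ E`. -/
def HasPath {V : Type*} (E : V → V → Prop) (i j : V) (m : ℕ) : Prop :=
  ∃ p : ℕ → V, p 0 = i ∧ p m = j ∧ ∀ k < m, E (p k) (p (k + 1))

/-- if z_i(k) ≥ D+1 then the network was in uniformly local
ε-consensus at time k - D - 1 and attains global (εD)-consensus at time k. -/
theorem stmt5 {V : Type*} [Fintype V] [DecidableEq V] [Nontrivial V]
    (E : V → V → Prop) [DecidableRel E] (D : ℕ)
    (hSC : ∀ i j : V, i ≠ j → ∃ m, 1 ≤ m ∧ m ≤ D ∧ HasPath E i j m)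
    (A : Matrix V V ℝ) (hA : RowStochastic A)
    (hAG : ∀ i j : V, 0 < A i j ↔ (E i j ∨ j = i))
    (ε : ℝ) (hε : 0 < ε)
    (x : ℕ → V → ℝ) (hx : ∀ k, x (k + 1) = A.mulVec (x k))
    (y z : ℕ → V → ℕ)
    (hy0 : ∀ i, y 0 i = 0) (hz0 : ∀ i, z 0 i = 0)
    (hy1 : ∀ k i, (∀ j, E i j → |x k i - x k j| < ε) → y (k + 1) i = y k i + 1)
    (hy2 : ∀ k i, ¬ (∀ j, E i j → |x k i - x k j| < ε) → y (k + 1) i = 0)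
    (hz : ∀ k i, z (k + 1) i =
      ((insert i (Finset.univ.filter (fun j => E i j))).inf'
        (Finset.insert_nonempty _ _) (fun j => min (z k j) (y k j))) + 1)
    (i : V) (k : ℕ) (hzk : D + 1 ≤ z k i) :
    (∀ j l : V, E j l → |x (k - D - 1) j - x (k - D - 1) l| < ε) ∧
    (∀ p q : V, |x k p - x k q| < ε * D) := by
  classical
  -- z grows by at most 1 per step
  have hzle : ∀ k (i : V), z k i ≤ k := by
    intro k
    induction k with
    | zero => intro i; rw [hz0]
    | succ k ih =>
      intro i
      rw [hz]
      have h1 : (insert i (Finset.univ.filter (fun j => E i j))).inf'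
          (Finset.insert_nonempty _ _) (fun j => min (z k j) (y k j)) ≤ min (z k i) (y k i) :=
        Finset.inf'_le _ (Finset.mem_insert_self _ _)
      have h2 := ih i
      have h3 : min (z k i) (y k i) ≤ z k i := min_le_left _ _
      omega
  -- one step unfolding of z
  have hA1 : ∀ k (i : V) m, m + 1 ≤ z (k + 1) i → ∀ j, (j = i ∨ E i j) →
      m ≤ z k j ∧ m ≤ y k j := by
    intro k i m h j hj
    rw [hz] at h
    have hmem : j ∈ insert i (Finset.univ.filter (fun j => E i j)) := by
      rcases hj with rfl | hE
      · exact Finset.mem_insert_self _ _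
      · exact Finset.mem_insert_of_mem (Finset.mem_filter.mpr ⟨Finset.mem_univ _, hE⟩)
    have h1 : (insert i (Finset.univ.filter (fun j => E i j))).inf'
        (Finset.insert_nonempty _ _) (fun j => min (z k j) (y k j)) ≤ min (z k j) (y k j) :=
      Finset.inf'_le _ hmem
    have h2 : min (z k j) (y k j) ≤ z k j := min_le_left _ _
    have h3 : min (z k j) (y k j) ≤ y k j := min_le_right _ _
    omega
  -- propagation along paths
  have hpath : ∀ d m (j i : V) k, m ≤ z k i → d ≤ m → HasPath E i j d →
      m - d ≤ z (k - d) j ∧ (1 ≤ d → m - d ≤ y (k - d) j) := by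
    intro d
    induction d with
    | zero =>
      rintro m j i k hzi _ ⟨p, h0, hm, _⟩
      have hji : j = i := by rw [← hm, h0]
      subst hji
      exact ⟨by simpa using hzi, by omega⟩
    | succ d ih =>
      rintro m j i k hzi hdm ⟨p, h0, hm, he⟩
      have hm1 : 1 ≤ m := by omega
      cases k with
      | zero => rw [hz0] at hzi; omega
      | succ k' =>
        have hedge : E i (p 1) := h0 ▸ he 0 (by omega)
        have hstep := hA1 k' i (m - 1) (by omega) (p 1) (Or.inr hedge)
        have htail : HasPath E (p 1) j d :=
          ⟨fun l => p (l + 1), rfl, hm, fun l hl => he (l + 1) (by omega)⟩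
        have hih := ih (m - 1) j (p 1) k' hstep.1 (by omega) htail
        constructor
        · have h1 : k' + 1 - (d + 1) = k' - d := by omega
          rw [h1]
          have := hih.1
          omega
        · intro _
          rcases Nat.eq_zero_or_pos d with rfl | hd
          · have hj1 : p 1 = j := hm
            have : m - 1 ≤ y k' j := hj1 ▸ hstep.2
            simpa using this
          · have h2 := hih.2 hd
            rw [show k' + 1 - (d + 1) = k' - d by omega]
            have : m - (d + 1) = m - 1 - d := by omega
            rw [this]
            exact h2
  -- y counting local consensus
  have hcons : ∀ r t (j : V), r < y t j → ∀ l, E j l →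
      |x (t - 1 - r) j - x (t - 1 - r) l| < ε := by
    intro r
    induction r with
    | zero =>
      intro t j hy l hE
      cases t with
      | zero => rw [hy0] at hy; omega
      | succ t' =>
        by_cases hc : ∀ l, E j l → |x t' j - x t' l| < ε
        · simpa using hc l hE
        · rw [hy2 t' j hc] at hy; omega
    | succ r ih =>
      intro t j hy l hE
      cases t with
      | zero => rw [hy0] at hy; omega
      | succ t' =>
        by_cases hc : ∀ l, E j l → |x t' j - x t' l| < ε
        · rw [hy1 t' j hc] at hy
          have h := ih t' j (by omega) l hE
          have heq : t' + 1 - 1 - (r + 1) = t' - 1 - r := by omega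
          rw [heq]
          exact h
        · rw [hy2 t' j hc] at hy; omega
  have hD1 : 1 ≤ D := by
    obtain ⟨a, b, hab⟩ := exists_pair_ne V
    obtain ⟨m, h1, h2, _⟩ := hSC a b hab
    omega
  have hkD : D + 1 ≤ k := le_trans hzk (hzle k i)
  -- Part 1: uniformly local consensus at time k - D - 1
  have part1 : ∀ j l, E j l → |x (k - D - 1) j - x (k - D - 1) l| < ε := by
    intro j l hE
    by_cases hji : j = i
    · subst hji
      cases k with
      | zero => omega
      | succ k' =>
        have hyi := (hA1 k' j D hzk j (Or.inl rfl)).2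
        have hc := hcons (D - 1) k' j (by omega) l hE
        rw [show k' + 1 - D - 1 = k' - 1 - (D - 1) by omega]
        exact hc
    · obtain ⟨d, hd1, hdD, hp⟩ := hSC i j (fun h => hji h.symm)
      have h := (hpath d (D + 1) j i k hzk (by omega) hp).2 hd1
      have hc := hcons (D - d) (k - d) j (by omega) l hE
      rw [show k - D - 1 = k - d - 1 - (D - d) by omega]
      exact hc
  refine ⟨part1, ?_⟩
  -- telescoping along paths at time t0 = k - D - 1
  have htel : ∀ m (p q : V), 1 ≤ m → HasPath E p q m →
      |x (k - D - 1) p - x (k - D - 1) q| < ε * m := by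
    intro m
    induction m with
    | zero => omega
    | succ m ih =>
      rintro p q _ ⟨ρ, h0, hm, he⟩
      rcases Nat.eq_zero_or_pos m with rfl | hm1
      · have hpq : E p q := by rw [← h0, ← hm]; exact he 0 (by omega)
        have := part1 p q hpq
        simpa using this
      · have hpm : HasPath E p (ρ m) m := ⟨ρ, h0, rfl, fun l hl => he l (by omega)⟩
        have h1 := ih p (ρ m) hm1 hpm
        have h2 : E (ρ m) q := hm ▸ he m (by omega)
        have h3 := part1 (ρ m) q h2
        calc |x (k - D - 1) p - x (k - D - 1) q|
            ≤ |x (k - D - 1) p - x (k - D - 1) (ρ m)| +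
              |x (k - D - 1) (ρ m) - x (k - D - 1) q| := abs_sub_le _ _ _
          _ < ε * m + ε := add_lt_add h1 h3
          _ = ε * (m + 1 : ℕ) := by push_cast; ring
  have hDpos : (0 : ℝ) < (D : ℝ) := by exact_mod_cast Nat.lt_of_lt_of_le Nat.zero_lt_one hD1
  have hspread : ∀ p q : V, |x (k - D - 1) p - x (k - D - 1) q| < ε * D := by
    intro p q
    by_cases hpq : p = q
    · subst hpq; simpa using mul_pos hε hDpos
    · obtain ⟨m, hm1, hmD, hp⟩ := hSC p q hpq
      have := htel m p q hm1 hp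
      have hle : (m : ℝ) ≤ (D : ℝ) := by exact_mod_cast hmD
      nlinarith
  -- monotone bounds under row-stochastic iteration
  set M := Finset.univ.sup' Finset.univ_nonempty (x (k - D - 1)) with hM
  set L := Finset.univ.inf' Finset.univ_nonempty (x (k - D - 1)) with hL
  have hbound : ∀ t (v : V), L ≤ x (k - D - 1 + t) v ∧ x (k - D - 1 + t) v ≤ M := by
    intro t
    induction t with
    | zero =>
      intro v
      exact ⟨Finset.inf'_le _ (Finset.mem_univ v), Finset.le_sup' _ (Finset.mem_univ v)⟩
    | succ t ih =>
      intro v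
      rw [show k - D - 1 + (t + 1) = (k - D - 1 + t) + 1 by omega, hx]
      have hmv : A.mulVec (x (k - D - 1 + t)) v = ∑ j, A v j * x (k - D - 1 + t) j := rfl
      constructor
      · rw [hmv]
        calc L = (∑ j, A v j) * L := by rw [hA.2 v, one_mul]
          _ = ∑ j, A v j * L := by rw [Finset.sum_mul]
          _ ≤ ∑ j, A v j * x (k - D - 1 + t) j :=
            Finset.sum_le_sum fun j _ => mul_le_mul_of_nonneg_left (ih j).1 (hA.1 v j)
      · rw [hmv]
        calc ∑ j, A v j * x (k - D - 1 + t) j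
            ≤ ∑ j, A v j * M :=
              Finset.sum_le_sum fun j _ => mul_le_mul_of_nonneg_left (ih j).2 (hA.1 v j)
          _ = (∑ j, A v j) * M := by rw [Finset.sum_mul]
          _ = M := by rw [hA.2 v, one_mul]
  obtain ⟨p0, _, hp0⟩ := Finset.exists_mem_eq_sup' (Finset.univ_nonempty (α := V)) (x (k - D - 1))
  obtain ⟨q0, _, hq0⟩ := Finset.exists_mem_eq_inf' (Finset.univ_nonempty (α := V)) (x (k - D - 1))
  have hML : M - L < ε * D := by
    have h1 : M - L ≤ |x (k - D - 1) p0 - x (k - D - 1) q0| := by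
      rw [hM, hL, hp0, hq0]
      exact le_abs_self _
    exact lt_of_le_of_lt h1 (hspread p0 q0)
  intro p q
  have hb1 := hbound (D + 1) p
  have hb2 := hbound (D + 1) q
  rw [show k - D - 1 + (D + 1) = k by omega] at hb1 hb2
  rw [abs_sub_lt_iff]
  constructor <;> linarith [hb1.1, hb1.2, hb2.1, hb2.2]
end

section
/- Suppose G is strongly connected with N nodes and the counter dynamics y_i, z_i run alongside the consensus update. If z_i(k) ≥ N for some node i, then the network attains global (ε(N−1))-consensus at time slot k, from any initial network state. -/
open Finset

lemma splice' {N : ℕ} {E : Fin N → Fin N → Prop} {i j : Fin N} {m t t' : ℕ}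
    (ht : t < t') (ht' : t' ≤ m) (p : ℕ → Fin N) (hp0 : p 0 = i) (hpm : p m = j)
    (hpe : ∀ k < m, E (p k) (p (k+1))) (heq : p t = p t') :
    HasPath E i j (m - (t' - t)) := by
  refine ⟨fun s => if s ≤ t then p s else p (s + (t' - t)), by simp [hp0], ?_, ?_⟩
  · by_cases h : m - (t' - t) ≤ t
    · have h1 : m = t' := by omega
      have h2 : m - (t' - t) = t := by omega
      simp only [h2, le_refl, if_pos]
      rw [heq, ← h1, hpm]
    · simp only [if_neg h]
      have h3 : m - (t' - t) + (t' - t) = m := by omega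
      rw [h3, hpm]
  · intro s hs
    by_cases h1 : s + 1 ≤ t
    · simp only [if_pos h1, if_pos (by omega : s ≤ t)]
      exact hpe s (by omega)
    · by_cases h2 : s ≤ t
      · have hst : s = t := by omega
        simp only [if_pos h2, if_neg h1]
        have h4 : s + 1 + (t' - t) = t' + 1 := by omega
        rw [h4, hst, heq]
        exact hpe t' (by omega)
      · simp only [if_neg h2, if_neg h1]
        have h5 : s + 1 + (t' - t) = s + (t' - t) + 1 := by omega
        rw [h5]
        exact hpe (s + (t' - t)) (by omega)

lemma path_shorten' {N : ℕ} {E : Fin N → Fin N → Prop} {i j : Fin N} (hij : i ≠ j) :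
    ∀ m, 1 ≤ m → HasPath E i j m → ∃ d, 1 ≤ d ∧ d ≤ N - 1 ∧ HasPath E i j d := by
  intro m
  induction m using Nat.strong_induction_on with
  | _ m IH =>
    intro hm hp
    by_cases hle : m ≤ N - 1
    · exact ⟨m, hm, hle, hp⟩
    · have hNpos : 0 < N := i.pos
      have hNm : N ≤ m := by omega
      obtain ⟨p, hp0, hpm, hpe⟩ := hp
      obtain ⟨a, b, hab, heq⟩ :=
        Fintype.exists_ne_map_eq_of_card_lt (fun a : Fin (N+1) => p a) (by simp)
      have hable : (a : ℕ) ≤ m := by omega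
      have hbble : (b : ℕ) ≤ m := by omega
      rcases lt_or_gt_of_ne hab with h | h
      · have hsp := splice' (t := a) (t' := b) h hbble p hp0 hpm hpe heq
        have hm' : 1 ≤ m - ((b : ℕ) - a) := by
          by_contra hc
          have h0 : (a : ℕ) = 0 ∧ (b : ℕ) = m := by omega
          exact hij (by rw [← hp0, ← hpm, ← h0.1, ← h0.2, heq])
        exact IH _ (by omega) hm' hsp
      · have hsp := splice' (t := b) (t' := a) h hable p hp0 hpm hpe heq.symm
        have hm' : 1 ≤ m - ((a : ℕ) - b) := by
          by_contra hc
          have h0 : (b : ℕ) = 0 ∧ (a : ℕ) = m := by omega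
          exact hij (by rw [← hp0, ← hpm, ← h0.1, ← h0.2, heq])
        exact IH _ (by omega) hm' hsp

/-- if z_i(k) ≥ N on a strongly connected network with N nodes,
then global (ε(N-1))-consensus holds at time k. -/
theorem stmt6 {N : ℕ} (hN : 2 ≤ N) (E : Fin N → Fin N → Prop) [DecidableRel E]
    (hSC : ∀ i j : Fin N, i ≠ j → ∃ m, 1 ≤ m ∧ HasPath E i j m)
    (A : Matrix (Fin N) (Fin N) ℝ) (hA : RowStochastic A)
    (hAG : ∀ i j : Fin N, 0 < A i j ↔ (E i j ∨ j = i))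
    (ε : ℝ) (hε : 0 < ε)
    (x : ℕ → Fin N → ℝ) (hx : ∀ k, x (k + 1) = A.mulVec (x k))
    (y z : ℕ → Fin N → ℕ)
    (hy0 : ∀ i, y 0 i = 0) (hz0 : ∀ i, z 0 i = 0)
    (hy1 : ∀ k i, (∀ j, E i j → |x k i - x k j| < ε) → y (k + 1) i = y k i + 1)
    (hy2 : ∀ k i, ¬ (∀ j, E i j → |x k i - x k j| < ε) → y (k + 1) i = 0)
    (hz : ∀ k i, z (k + 1) i =
      ((insert i (Finset.univ.filter (fun j => E i j))).inf'
        (Finset.insert_nonempty _ _) (fun j => min (z k j) (y k j))) + 1)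
    (i : Fin N) (k : ℕ) (hzk : N ≤ z k i) :
    ∀ p q : Fin N, |x k p - x k q| < ε * ((N : ℝ) - 1) := by
  -- z grows by at most 1 per step
  have hzub : ∀ s v, z s v ≤ s := by
    intro s
    induction s with
    | zero => intro v; simp [hz0]
    | succ s ih =>
      intro v
      rw [hz s v]
      have hle := Finset.inf'_le (f := fun j => min (z s j) (y s j))
        (Finset.insert_nonempty v (univ.filter (fun j => E v j))).choose_spec
      have hle2 : (insert v (univ.filter (fun j => E v j))).inf'
          (Finset.insert_nonempty _ _) (fun j => min (z s j) (y s j))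
          ≤ min (z s v) (y s v) :=
        Finset.inf'_le _ (mem_insert_self _ _)
      have := min_le_left (z s v) (y s v)
      have := ih v
      omega
  have hkN : N ≤ k := le_trans hzk (hzub k i)
  -- one-step z lower bound extraction
  have hzstep : ∀ s (v j : Fin N), (E v j ∨ j = v) →
      z (s+1) v ≤ min (z s j) (y s j) + 1 := by
    intro s v j hj
    rw [hz s v]
    have hmem : j ∈ insert v (univ.filter (fun l => E v l)) := by
      rcases hj with h | h
      · exact mem_insert_of_mem (by simp [h])
      · rw [h]; exact mem_insert_self _ _
    have := Finset.inf'_le (f := fun l => min (z s l) (y s l)) (b := j) hmem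
    omega
  -- chain propagation along a path starting at i
  have hchain : ∀ (p : ℕ → Fin N), p 0 = i → ∀ t, (∀ s < t, E (p s) (p (s+1))) →
      t ≤ N - 1 → N - t ≤ z (k - t) (p t) ∧ (1 ≤ t → N - t ≤ y (k - t) (p t)) := by
    intro p hp0 t
    induction t with
    | zero =>
      intro _ _
      refine ⟨by rw [hp0]; simpa using hzk, by omega⟩
    | succ t ih =>
      intro he hle
      obtain ⟨hzt, _⟩ := ih (fun s hs => he s (by omega)) (by omega)
      have h1 : 1 ≤ k - t := by
        by_contra h
        have h0 : k - t = 0 := by omega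
        rw [h0, hz0] at hzt
        omega
      have hk1 : k - t = (k - (t+1)) + 1 := by omega
      have hstep := hzstep (k - (t+1)) (p t) (p (t+1)) (Or.inl (he t (by omega)))
      rw [← hk1] at hstep
      have hl := min_le_left (z (k - (t+1)) (p (t+1))) (y (k - (t+1)) (p (t+1)))
      have hr := min_le_right (z (k - (t+1)) (p (t+1))) (y (k - (t+1)) (p (t+1)))
      exact ⟨by omega, fun _ => by omega⟩
  -- y at i itself
  have hyi : N - 1 ≤ y (k - 1) i := by
    have hk1 : k = (k - 1) + 1 := by omega
    have hstep := hzstep (k - 1) i i (Or.inr rfl)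
    rw [← hk1] at hstep
    have hr := min_le_right (z (k - 1) i) (y (k - 1) i)
    omega
  -- y counter unrolling: condition held s steps ago
  have hycond : ∀ s, 1 ≤ s → ∀ T v, s ≤ y (T + s) v →
      ∀ l, E v l → |x T v - x T l| < ε := by
    intro s
    induction s with
    | zero => omega
    | succ s ih =>
      intro _ T v hyv
      have hTs : T + (s + 1) = (T + s) + 1 := rfl
      rw [hTs] at hyv
      by_cases hc : ∀ l, E v l → |x (T + s) v - x (T + s) l| < ε
      · rcases Nat.eq_zero_or_pos s with hs0 | hs0
        · subst hs0; simpa using hc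
        · have heq := hy1 (T + s) v hc
          exact ih hs0 T v (by omega)
      · have heq := hy2 (T + s) v hc
        omega
  set τ := k - N with hτ
  -- every node's local condition holds at time τ
  have hcondAll : ∀ v, ∀ l, E v l → |x τ v - x τ l| < ε := by
    intro v
    by_cases hvi : v = i
    · subst hvi
      have heq : k - 1 = τ + (N - 1) := by omega
      rw [heq] at hyi
      exact hycond (N - 1) (by omega) τ v hyi
    · obtain ⟨m, hm1, hpath⟩ := hSC i v (fun h => hvi h.symm)
      obtain ⟨d, hd1, hdN, p, hp0, hpd, hpe⟩ :=
        path_shorten' (fun h => hvi h.symm) m hm1 hpath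
      obtain ⟨_, hyv⟩ := hchain p hp0 d hpe hdN
      have hyv := hyv hd1
      rw [hpd] at hyv
      have heq : k - d = τ + (N - d) := by omega
      rw [heq] at hyv
      exact hycond (N - d) (by omega) τ v hyv
  -- chaining along a path at time τ
  have hchainsum : ∀ d (p : ℕ → Fin N), 1 ≤ d → (∀ s < d, E (p s) (p (s+1))) →
      |x τ (p 0) - x τ (p d)| < ε * d := by
    intro d
    induction d with
    | zero => omega
    | succ d ih =>
      intro p _ he
      rcases Nat.eq_zero_or_pos d with h0 | h0
      · subst h0
        simpa using hcondAll (p 0) (p 1) (he 0 Nat.one_pos)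
      · have h1 := ih p h0 (fun s hs => he s (by omega))
        have h2 := hcondAll (p d) (p (d+1)) (he d (Nat.lt_succ_self d))
        have h3 : |x τ (p 0) - x τ (p (d+1))| ≤
            |x τ (p 0) - x τ (p d)| + |x τ (p d) - x τ (p (d+1))| := abs_sub_le _ _ _
        have h4 : (((d : ℕ) + 1 : ℕ) : ℝ) = (d : ℝ) + 1 := by push_cast; ring
        rw [h4]
        nlinarith [h1, h2, h3]
  -- spread bound at time τ
  have hNcast : (1 : ℝ) ≤ (N : ℝ) - 1 := by
    have : (2 : ℝ) ≤ (N : ℝ) := by exact_mod_cast hN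
    linarith
  have hτall : ∀ p q : Fin N, |x τ p - x τ q| < ε * ((N : ℝ) - 1) := by
    intro p q
    by_cases hpq : p = q
    · subst hpq
      simp only [sub_self, abs_zero]
      positivity
    · obtain ⟨m, hm1, hpath⟩ := hSC p q hpq
      obtain ⟨d, hd1, hdN, pp, hp0, hpd, hpe⟩ := path_shorten' hpq m hm1 hpath
      have := hchainsum d pp hd1 hpe
      rw [hp0, hpd] at this
      have hdle : (d : ℝ) ≤ (N : ℝ) - 1 := by
        have : ((d : ℕ) : ℝ) ≤ ((N - 1 : ℕ) : ℝ) := by exact_mod_cast hdN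
        have h2 : ((N - 1 : ℕ) : ℝ) = (N : ℝ) - 1 := by
          have : 1 ≤ N := by omega
          push_cast [this]
          ring
        linarith [this, h2.le]
      calc |x τ p - x τ q| < ε * d := this
        _ ≤ ε * ((N : ℝ) - 1) := by nlinarith
  -- spread non-expansiveness
  have hmono : ∀ s, (∀ p q : Fin N, |x s p - x s q| < ε * ((N : ℝ) - 1)) →
      ∀ p q : Fin N, |x (s+1) p - x (s+1) q| < ε * ((N : ℝ) - 1) := by
    intro s hs p q
    have : Nonempty (Fin N) := ⟨i⟩
    obtain ⟨a, _, ha⟩ := Finset.exists_max_image univ (x s) univ_nonempty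
    obtain ⟨b, _, hb⟩ := Finset.exists_min_image univ (x s) univ_nonempty
    have hub : ∀ r : Fin N, x (s+1) r ≤ x s a := by
      intro r
      rw [hx s]
      show ∑ j, A r j * x s j ≤ x s a
      calc ∑ j, A r j * x s j ≤ ∑ j, A r j * x s a := by
            apply Finset.sum_le_sum
            intro j _
            exact mul_le_mul_of_nonneg_left (ha j (mem_univ j)) (hA.1 r j)
        _ = x s a := by rw [← Finset.sum_mul, hA.2 r, one_mul]
    have hlb : ∀ r : Fin N, x s b ≤ x (s+1) r := by
      intro r
      rw [hx s]
      show x s b ≤ ∑ j, A r j * x s j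
      calc x s b = ∑ j, A r j * x s b := by rw [← Finset.sum_mul, hA.2 r, one_mul]
        _ ≤ ∑ j, A r j * x s j := by
            apply Finset.sum_le_sum
            intro j _
            exact mul_le_mul_of_nonneg_left (hb j (mem_univ j)) (hA.1 r j)
    have hab := hs a b
    rw [abs_sub_lt_iff] at hab ⊢
    constructor
    · linarith [hub p, hlb q, hab.1, hb a (mem_univ a)]
    · linarith [hub q, hlb p, hab.1, hb a (mem_univ a)]
  -- propagate to time k
  have hall : ∀ n, ∀ p q : Fin N, |x (τ + n) p - x (τ + n) q| < ε * ((N : ℝ) - 1) := by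
    intro n
    induction n with
    | zero => simpa using hτall
    | succ n ih => exact hmono (τ + n) ih
  have hk : k = τ + N := by omega
  rw [hk]
  exact hall N
end

section
/- If A is row-stochastic nonnegative and x(k+j) = A^j x(k), then d(x(k+j)) ≤ (1 − τ(A^j)) d(x(k)) for all k, j ∈ ℕ, where d(x) = max_i x_i − min_i x_i and τ is the ergodicity coefficient. Consequently, if τ(A^h) > 0 for some h, then d(x(k)) → 0 as k → ∞, i.e., asymptotic consensus holds. -/
open Finset

lemma my_spread_nonneg {V : Type*} [Fintype V] [Nonempty V] (x : V → ℝ) :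
    0 ≤ spread x := by
  have i := Classical.arbitrary V
  have h1 := Finset.inf'_le x (Finset.mem_univ i)
  have h2 := Finset.le_sup' x (Finset.mem_univ i)
  unfold spread; linarith

lemma my_rowStochastic_mul {V : Type*} [Fintype V] {A B : Matrix V V ℝ}
    (hA : RowStochastic A) (hB : RowStochastic B) : RowStochastic (A*B) := by
  constructor
  · intro i j
    rw [Matrix.mul_apply]
    exact Finset.sum_nonneg fun k _ => mul_nonneg (hA.1 i k) (hB.1 k j)
  · intro i
    simp only [Matrix.mul_apply]
    rw [Finset.sum_comm]
    have : ∀ k ∈ Finset.univ, ∑ j, A i k * B k j = A i k := by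
      intro k _
      rw [← Finset.mul_sum, hB.2 k, mul_one]
    rw [Finset.sum_congr rfl this, hA.2 i]

lemma my_rowStochastic_pow {V : Type*} [Fintype V] [DecidableEq V] {A : Matrix V V ℝ}
    (hA : RowStochastic A) (n : ℕ) : RowStochastic (A^n) := by
  induction n with
  | zero =>
    constructor
    · intro i j; rw [pow_zero, Matrix.one_apply]; positivity
    · intro i; simp [pow_zero, Matrix.one_apply]
  | succ n ih =>
    rw [pow_succ]
    exact my_rowStochastic_mul ih hA

lemma my_tau_le {N : ℕ} (B : Matrix (Fin N) (Fin N) ℝ) (hB : ∀ i j, 0 ≤ B i j)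
    {i j : Fin N} (hij : i ≠ j) : tau B ≤ ∑ k, min (B i k) (B j k) := by
  apply csInf_le
  · refine ⟨0, ?_⟩
    rintro s ⟨a, b, hab, rfl⟩
    exact Finset.sum_nonneg fun k _ => le_min (hB a k) (hB b k)
  · exact ⟨i, j, hij, rfl⟩

lemma my_tau_nonneg {N : ℕ} (B : Matrix (Fin N) (Fin N) ℝ) (hB : ∀ i j, 0 ≤ B i j) :
    0 ≤ tau B := by
  apply Real.sInf_nonneg
  rintro s ⟨a, b, hab, rfl⟩
  exact Finset.sum_nonneg fun k _ => le_min (hB a k) (hB b k)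

lemma my_tau_le_one {N : ℕ} (hN : 2 ≤ N) (B : Matrix (Fin N) (Fin N) ℝ)
    (hB : RowStochastic B) : tau B ≤ 1 := by
  have h01 : (⟨0, by omega⟩ : Fin N) ≠ ⟨1, by omega⟩ := by
    simp [Fin.ext_iff]
  calc tau B ≤ ∑ k, min (B ⟨0, by omega⟩ k) (B ⟨1, by omega⟩ k) := my_tau_le B hB.1 h01
    _ ≤ ∑ k, B ⟨0, by omega⟩ k := Finset.sum_le_sum fun k _ => min_le_left _ _
    _ = 1 := hB.2 _

lemma my_contraction {N : ℕ} [NeZero N] (hN : 2 ≤ N) (B : Matrix (Fin N) (Fin N) ℝ)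
    (hB : RowStochastic B) (y : Fin N → ℝ) :
    spread (B.mulVec y) ≤ (1 - tau B) * spread y := by
  obtain ⟨i, -, hi⟩ := Finset.exists_mem_eq_sup' Finset.univ_nonempty (B.mulVec y)
  obtain ⟨j, -, hj⟩ := Finset.exists_mem_eq_inf' Finset.univ_nonempty (B.mulVec y)
  have hsy : 0 ≤ spread y := my_spread_nonneg y
  have htau1 : tau B ≤ 1 := my_tau_le_one hN B hB
  by_cases hij : i = j
  · have : spread (B.mulVec y) = 0 := by
      unfold spread; rw [hi, hj, hij, sub_self]
    rw [this]
    exact mul_nonneg (by linarith) hsy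
  · set M := Finset.univ.sup' Finset.univ_nonempty y with hM
    set m := Finset.univ.inf' Finset.univ_nonempty y with hm
    set s := ∑ k, min (B i k) (B j k) with hs
    have hts : tau B ≤ s := my_tau_le B hB.1 hij
    have hcoef1 : ∀ l, 0 ≤ B i l - min (B i l) (B j l) := fun l => by
      simp [min_le_left]
    have hcoef2 : ∀ l, 0 ≤ B j l - min (B i l) (B j l) := fun l => by
      simp [min_le_right]
    have hsum1 : ∑ l, (B i l - min (B i l) (B j l)) = 1 - s := by
      rw [Finset.sum_sub_distrib, hB.2 i]
    have hsum2 : ∑ l, (B j l - min (B i l) (B j l)) = 1 - s := by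
      rw [Finset.sum_sub_distrib, hB.2 j]
    have hyM : ∀ l, y l ≤ M := fun l => Finset.le_sup' y (Finset.mem_univ l)
    have hym : ∀ l, m ≤ y l := fun l => Finset.inf'_le y (Finset.mem_univ l)
    have key : B.mulVec y i - B.mulVec y j ≤ (1 - s) * (M - m) := by
      have e1 : B.mulVec y i - B.mulVec y j
          = ∑ l, (B i l - min (B i l) (B j l)) * y l
            - ∑ l, (B j l - min (B i l) (B j l)) * y l := by
        simp only [Matrix.mulVec, dotProduct, sub_mul]
        rw [Finset.sum_sub_distrib, Finset.sum_sub_distrib]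
        ring
      have b1 : ∑ l, (B i l - min (B i l) (B j l)) * y l ≤ (1 - s) * M := by
        rw [← hsum1, Finset.sum_mul]
        exact Finset.sum_le_sum fun l _ => mul_le_mul_of_nonneg_left (hyM l) (hcoef1 l)
      have b2 : (1 - s) * m ≤ ∑ l, (B j l - min (B i l) (B j l)) * y l := by
        rw [← hsum2, Finset.sum_mul]
        exact Finset.sum_le_sum fun l _ => mul_le_mul_of_nonneg_left (hym l) (hcoef2 l)
      rw [e1]; nlinarith
    have : spread (B.mulVec y) = B.mulVec y i - B.mulVec y j := by
      unfold spread; rw [hi, hj]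
    rw [this]
    calc B.mulVec y i - B.mulVec y j ≤ (1 - s) * (M - m) := key
      _ ≤ (1 - tau B) * (M - m) := by
          apply mul_le_mul_of_nonneg_right (by linarith)
          have : spread y = M - m := rfl
          linarith
      _ = (1 - tau B) * spread y := rfl

/-- d(x(k+j)) ≤ (1-τ(A^j)) d(x(k)); if τ(A^h) > 0 for some h,
the spread converges to 0 (asymptotic consensus). -/
theorem stmt15 {N : ℕ} [NeZero N] (hN : 2 ≤ N) (A : Matrix (Fin N) (Fin N) ℝ)
    (hA : RowStochastic A) (x0 : Fin N → ℝ) :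
    (∀ k j : ℕ, spread ((A ^ (k + j)).mulVec x0)
        ≤ (1 - tau (A ^ j)) * spread ((A ^ k).mulVec x0)) ∧
    (∀ h : ℕ, 0 < tau (A ^ h) →
      Filter.Tendsto (fun k => spread ((A ^ k).mulVec x0)) Filter.atTop (nhds 0)) := by
  have part1 : ∀ k j : ℕ, spread ((A ^ (k + j)).mulVec x0)
      ≤ (1 - tau (A ^ j)) * spread ((A ^ k).mulVec x0) := by
    intro k j
    have e : (A ^ (k + j)).mulVec x0 = (A ^ j).mulVec ((A ^ k).mulVec x0) := by
      rw [Matrix.mulVec_mulVec, ← pow_add, Nat.add_comm j k]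
    rw [e]
    exact my_contraction hN (A ^ j) (my_rowStochastic_pow hA j) _
  refine ⟨part1, ?_⟩
  intro h htau
  have hh : h ≠ 0 := by
    rintro rfl
    have h01 : (⟨0, by omega⟩ : Fin N) ≠ ⟨1, by omega⟩ := by simp [Fin.ext_iff]
    have := my_tau_le (A ^ 0) (my_rowStochastic_pow hA 0).1 h01
    rw [pow_zero] at this htau
    have hz : ∑ k, min ((1 : Matrix (Fin N) (Fin N) ℝ) ⟨0, by omega⟩ k)
        ((1 : Matrix (Fin N) (Fin N) ℝ) ⟨1, by omega⟩ k) = 0 := by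
      apply Finset.sum_eq_zero
      intro k _
      simp only [Matrix.one_apply]
      split_ifs with h1 h2 h2
      · exact absurd (h1.trans h2.symm) h01
      · simp
      · simp
      · simp
    linarith [hz ▸ this]
  set c := 1 - tau (A ^ h) with hc
  have hc0 : 0 ≤ c := by
    have := my_tau_le_one hN (A ^ h) (my_rowStochastic_pow hA h); linarith
  have hc1 : c < 1 := by linarith
  have mono : ∀ r, spread ((A ^ r).mulVec x0) ≤ spread x0 := by
    intro r
    have := part1 0 r
    rw [Nat.zero_add, pow_zero, Matrix.one_mulVec] at this
    have h1 : 1 - tau (A ^ r) ≤ 1 := by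
      have := my_tau_nonneg (A ^ r) (my_rowStochastic_pow hA r).1; linarith
    calc spread ((A ^ r).mulVec x0) ≤ (1 - tau (A ^ r)) * spread x0 := this
      _ ≤ 1 * spread x0 := mul_le_mul_of_nonneg_right h1 (my_spread_nonneg x0)
      _ = spread x0 := one_mul _
  have iter : ∀ q r : ℕ, spread ((A ^ (r + q * h)).mulVec x0)
      ≤ c ^ q * spread ((A ^ r).mulVec x0) := by
    intro q
    induction q with
    | zero => intro r; simp
    | succ q ih =>
      intro r
      have e : r + (q + 1) * h = (r + q * h) + h := by ring
      rw [e]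
      calc spread ((A ^ ((r + q * h) + h)).mulVec x0)
          ≤ c * spread ((A ^ (r + q * h)).mulVec x0) := part1 _ h
        _ ≤ c * (c ^ q * spread ((A ^ r).mulVec x0)) :=
            mul_le_mul_of_nonneg_left (ih r) hc0
        _ = c ^ (q + 1) * spread ((A ^ r).mulVec x0) := by ring
  have bound : ∀ n : ℕ, spread ((A ^ n).mulVec x0) ≤ c ^ (n / h) * spread x0 := by
    intro n
    have e : n % h + (n / h) * h = n := by
      rw [Nat.mul_comm]; exact Nat.mod_add_div n h
    calc spread ((A ^ n).mulVec x0)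
        = spread ((A ^ (n % h + (n / h) * h)).mulVec x0) := by rw [e]
      _ ≤ c ^ (n / h) * spread ((A ^ (n % h)).mulVec x0) := iter _ _
      _ ≤ c ^ (n / h) * spread x0 :=
          mul_le_mul_of_nonneg_left (mono _) (pow_nonneg hc0 _)
  have hdiv : Filter.Tendsto (fun n : ℕ => n / h) Filter.atTop Filter.atTop := by
    apply Filter.tendsto_atTop_atTop.2
    intro b
    exact ⟨b * h, fun n hn => (Nat.le_div_iff_mul_le (Nat.pos_of_ne_zero hh)).2 hn⟩
  have hpow : Filter.Tendsto (fun n : ℕ => c ^ (n / h) * spread x0) Filter.atTop (nhds 0) := by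
    have h1 : Filter.Tendsto (fun q : ℕ => c ^ q) Filter.atTop (nhds 0) :=
      tendsto_pow_atTop_nhds_zero_of_lt_one hc0 hc1
    have := (h1.comp hdiv).mul_const (spread x0)
    simpa using this
  exact squeeze_zero (fun n => my_spread_nonneg _) bound hpow
end

section
/- Let G be strongly connected with diameter D, A row-stochastic compatible with G, h ≤ D minimal with 0 < τ(A^h) < 1, and suppose the network first reaches global δ-consensus at time k_0. Then under Algorithm 1 (counters y_i, z_i with threshold z_i ≥ D+1 using tolerance ε = δ/D), every node stops by time k_0 + T_r with T_r ≤ h·⌈(−log D)/(log(1 − τ(A^h)))⌉ + D + 1. -/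
open Finset

section aux
set_option linter.unusedSectionVars false
variable {V : Type*} [Fintype V] [Nonempty V]

lemma rs_mul {A B : Matrix V V ℝ} (hA : RowStochastic A) (hB : RowStochastic B) :
    RowStochastic (A * B) := by
  constructor
  · intro i j
    rw [Matrix.mul_apply]
    exact Finset.sum_nonneg fun k _ => mul_nonneg (hA.1 i k) (hB.1 k j)
  · intro i
    simp only [Matrix.mul_apply]
    rw [Finset.sum_comm]
    simp_rw [← Finset.mul_sum, hB.2]
    simpa using hA.2 i

lemma rs_pow {A : Matrix V V ℝ} [DecidableEq V] (hA : RowStochastic A) (n : ℕ) :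
    RowStochastic (A ^ n) := by
  induction n with
  | zero =>
    constructor
    · intro i j; simp [Matrix.one_apply]; split <;> norm_num
    · intro i; simp [Matrix.one_apply]
  | succ n ih => rw [pow_succ]; exact rs_mul ih hA

lemma spread_nonneg (v : V → ℝ) : 0 ≤ spread v := by
  obtain ⟨i⟩ := ‹Nonempty V›
  have h1 : Finset.univ.inf' Finset.univ_nonempty v ≤ v i := Finset.inf'_le _ (mem_univ i)
  have h2 : v i ≤ Finset.univ.sup' Finset.univ_nonempty v := Finset.le_sup' _ (mem_univ i)
  unfold spread; linarith

lemma abs_sub_le_spread (v : V → ℝ) (i j : V) : |v i - v j| ≤ spread v := by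
  have h1 : Finset.univ.inf' Finset.univ_nonempty v ≤ v i := Finset.inf'_le _ (mem_univ i)
  have h2 : v i ≤ Finset.univ.sup' Finset.univ_nonempty v := Finset.le_sup' _ (mem_univ i)
  have h3 : Finset.univ.inf' Finset.univ_nonempty v ≤ v j := Finset.inf'_le _ (mem_univ j)
  have h4 : v j ≤ Finset.univ.sup' Finset.univ_nonempty v := Finset.le_sup' _ (mem_univ j)
  rw [abs_sub_le_iff]; unfold spread; constructor <;> linarith

lemma mulVec_le_sup {A : Matrix V V ℝ} (hA : RowStochastic A) (v : V → ℝ) (i : V) :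
    A.mulVec v i ≤ Finset.univ.sup' Finset.univ_nonempty v := by
  have : A.mulVec v i ≤ ∑ k, A i k * Finset.univ.sup' Finset.univ_nonempty v := by
    apply Finset.sum_le_sum
    intro k _
    exact mul_le_mul_of_nonneg_left (Finset.le_sup' _ (mem_univ k)) (hA.1 i k)
  rwa [← Finset.sum_mul, hA.2 i, one_mul] at this

lemma inf_le_mulVec {A : Matrix V V ℝ} (hA : RowStochastic A) (v : V → ℝ) (i : V) :
    Finset.univ.inf' Finset.univ_nonempty v ≤ A.mulVec v i := by
  have : ∑ k, A i k * Finset.univ.inf' Finset.univ_nonempty v ≤ A.mulVec v i := by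
    apply Finset.sum_le_sum
    intro k _
    exact mul_le_mul_of_nonneg_left (Finset.inf'_le _ (mem_univ k)) (hA.1 i k)
  rwa [← Finset.sum_mul, hA.2 i, one_mul] at this

lemma spread_mulVec_le {A : Matrix V V ℝ} (hA : RowStochastic A) (v : V → ℝ) :
    spread (A.mulVec v) ≤ spread v := by
  unfold spread
  have h1 : Finset.univ.sup' Finset.univ_nonempty (A.mulVec v) ≤
      Finset.univ.sup' Finset.univ_nonempty v :=
    Finset.sup'_le _ _ fun i _ => mulVec_le_sup hA v i
  have h2 : Finset.univ.inf' Finset.univ_nonempty v ≤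
      Finset.univ.inf' Finset.univ_nonempty (A.mulVec v) :=
    Finset.le_inf' _ _ fun i _ => inf_le_mulVec hA v i
  linarith

lemma tau_le {A : Matrix V V ℝ} (hA : ∀ i j, 0 ≤ A i j) {i j : V} (hij : i ≠ j) :
    tau A ≤ ∑ k, min (A i k) (A j k) := by
  apply csInf_le
  · refine ⟨0, ?_⟩
    rintro s ⟨a, b, hab, rfl⟩
    exact Finset.sum_nonneg fun k _ => le_min (hA a k) (hA b k)
  · exact ⟨i, j, hij, rfl⟩

lemma pair_contract {A : Matrix V V ℝ} (hA : RowStochastic A) (v : V → ℝ)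
    {i j : V} (hij : i ≠ j) :
    A.mulVec v i - A.mulVec v j ≤ (1 - tau A) * spread v := by
  set M := Finset.univ.sup' Finset.univ_nonempty v with hM
  set m := Finset.univ.inf' Finset.univ_nonempty v with hm
  set s := ∑ k, min (A i k) (A j k) with hs
  have hcoeff1 : ∀ k, 0 ≤ A i k - min (A i k) (A j k) := fun k => by
    have := min_le_left (A i k) (A j k); linarith
  have hcoeff2 : ∀ k, 0 ≤ A j k - min (A i k) (A j k) := fun k => by
    have := min_le_right (A i k) (A j k); linarith
  have hdiff : A.mulVec v i - A.mulVec v j =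
      (∑ k, (A i k - min (A i k) (A j k)) * v k)
      - (∑ k, (A j k - min (A i k) (A j k)) * v k) := by
    simp only [Matrix.mulVec, dotProduct]
    rw [← Finset.sum_sub_distrib, ← Finset.sum_sub_distrib]
    congr 1; ext k; ring
  have hsum1 : ∑ k, (A i k - min (A i k) (A j k)) = 1 - s := by
    rw [Finset.sum_sub_distrib, hA.2 i, hs]
  have hsum2 : ∑ k, (A j k - min (A i k) (A j k)) = 1 - s := by
    rw [Finset.sum_sub_distrib, hA.2 j, hs]
  have hub : (∑ k, (A i k - min (A i k) (A j k)) * v k) ≤ (1 - s) * M := by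
    rw [← hsum1, Finset.sum_mul]
    apply Finset.sum_le_sum
    intro k _
    exact mul_le_mul_of_nonneg_left (Finset.le_sup' _ (mem_univ k)) (hcoeff1 k)
  have hlb : (1 - s) * m ≤ ∑ k, (A j k - min (A i k) (A j k)) * v k := by
    rw [← hsum2, Finset.sum_mul]
    apply Finset.sum_le_sum
    intro k _
    exact mul_le_mul_of_nonneg_left (Finset.inf'_le _ (mem_univ k)) (hcoeff2 k)
  have hτs : tau A ≤ s := tau_le hA.1 hij
  have hspread : spread v = M - m := rfl
  have h0 : 0 ≤ spread v := spread_nonneg v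
  have key : A.mulVec v i - A.mulVec v j ≤ (1 - s) * spread v := by
    rw [hdiff, hspread]; nlinarith
  have : (1 - s) * spread v ≤ (1 - tau A) * spread v :=
    mul_le_mul_of_nonneg_right (by linarith) h0
  linarith

lemma spread_contract {A : Matrix V V ℝ} (hA : RowStochastic A) (hτ : tau A ≤ 1)
    (v : V → ℝ) : spread (A.mulVec v) ≤ (1 - tau A) * spread v := by
  obtain ⟨i, -, hi⟩ := Finset.exists_mem_eq_sup' (Finset.univ_nonempty (α := V)) (A.mulVec v)
  obtain ⟨j, -, hj⟩ := Finset.exists_mem_eq_inf' (Finset.univ_nonempty (α := V)) (A.mulVec v)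
  have hsp : spread (A.mulVec v) = A.mulVec v i - A.mulVec v j := by
    rw [spread, hi, hj]
  by_cases hij : i = j
  · rw [hsp, hij, sub_self]
    exact mul_nonneg (by linarith) (spread_nonneg v)
  · rw [hsp]; exact pair_contract hA v hij

end aux

/-- response-time bound of Algorithm 1. If the network first
reaches global δ-consensus at time k₀, then with tolerance ε = δ/D every node
detects (z_i ≥ D+1) within T_r ≤ h⌈(-log D)/log(1-τ(A^h))⌉ + D + 1 extra slots. -/
theorem stmt17 {N : ℕ} [NeZero N] (hN : 2 ≤ N)
    (E : Fin N → Fin N → Prop) [DecidableRel E] (D : ℕ)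
    (hSC : ∀ i j : Fin N, i ≠ j → ∃ m, 1 ≤ m ∧ m ≤ D ∧ HasPath E i j m)
    (A : Matrix (Fin N) (Fin N) ℝ) (hA : RowStochastic A)
    (hAG : ∀ i j : Fin N, 0 < A i j ↔ (E i j ∨ j = i))
    (x : ℕ → Fin N → ℝ) (hx : ∀ k, x (k + 1) = A.mulVec (x k))
    (δ : ℝ) (hδ : 0 < δ)
    (y z : ℕ → Fin N → ℕ)
    (hy0 : ∀ i, y 0 i = 0) (hz0 : ∀ i, z 0 i = 0)
    (hy1 : ∀ k i, (∀ j, E i j → |x k i - x k j| < δ / D) → y (k + 1) i = y k i + 1)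
    (hy2 : ∀ k i, ¬ (∀ j, E i j → |x k i - x k j| < δ / D) → y (k + 1) i = 0)
    (hz : ∀ k i, z (k + 1) i =
      ((insert i (Finset.univ.filter (fun j => E i j))).inf'
        (Finset.insert_nonempty _ _) (fun j => min (z k j) (y k j))) + 1)
    (h : ℕ) (hh1 : 1 ≤ h) (hhD : h ≤ D)
    (hτ0 : 0 < tau (A ^ h)) (hτ1 : tau (A ^ h) < 1)
    (hmin : ∀ h' : ℕ, 1 ≤ h' → h' < h → ¬ 0 < tau (A ^ h'))
    (k0 : ℕ)
    (hk0 : ∀ i j : Fin N, |x k0 i - x k0 j| < δ)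
    (hfirst : ∀ t < k0, ¬ ∀ i j : Fin N, |x t i - x t j| < δ) :
    ∀ i : Fin N, ∃ k : ℕ,
      k ≤ k0 + (h * ⌈(-Real.log D) / Real.log (1 - tau (A ^ h))⌉₊ + D + 1) ∧
      D + 1 ≤ z k i := by
  -- D ≥ 1
  have hne : (⟨0, by omega⟩ : Fin N) ≠ ⟨1, by omega⟩ := by simp [Fin.ext_iff]
  obtain ⟨m0, hm01, hm0D, -⟩ := hSC _ _ hne
  have hD1 : 1 ≤ D := le_trans hm01 hm0D
  have hDpos : (0:ℝ) < (D : ℝ) := by exact_mod_cast Nat.lt_of_lt_of_le Nat.zero_lt_one hD1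
  have hDge1 : (1:ℝ) ≤ (D : ℝ) := by exact_mod_cast hD1
  set B := A ^ h with hB
  have hBrs : RowStochastic B := rs_pow hA h
  set r := 1 - tau B with hr
  have hr0 : 0 < r := by rw [hr]; linarith
  have hr1 : r < 1 := by rw [hr]; linarith
  set m := ⌈(-Real.log D) / Real.log (1 - tau (A ^ h))⌉₊ with hm
  -- r ^ m ≤ 1/D
  have hlogr : Real.log r < 0 := Real.log_neg hr0 hr1
  have hceil : (-Real.log D) / Real.log r ≤ (m : ℝ) := by
    rw [hm]; exact Nat.le_ceil _
  have hmul : (m : ℝ) * Real.log r ≤ -Real.log D := (div_le_iff_of_neg hlogr).mp hceil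
  have hpow : r ^ m ≤ (D : ℝ)⁻¹ := by
    have hlog : Real.log (r ^ m) ≤ Real.log ((D : ℝ)⁻¹) := by
      rw [Real.log_pow, Real.log_inv]; exact_mod_cast hmul
    have := Real.exp_le_exp.mpr hlog
    rwa [Real.exp_log (pow_pos hr0 m), Real.exp_log (by positivity)] at this
  -- dynamics
  have hxn : ∀ k n, x (k + n) = (A ^ n).mulVec (x k) := by
    intro k n
    induction n with
    | zero => simp [Matrix.mulVec_one]
    | succ n ih =>
      have : k + (n + 1) = (k + n) + 1 := by omega
      rw [this, hx, ih, pow_succ', Matrix.mulVec_mulVec]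
  have hmono : ∀ k n, spread (x (k + n)) ≤ spread (x k) := by
    intro k n
    induction n with
    | zero => simp
    | succ n ih =>
      have : k + (n + 1) = (k + n) + 1 := by omega
      rw [this, hx]
      exact le_trans (spread_mulVec_le hA _) ih
  have hgeo : ∀ s, spread (x (k0 + h * s)) ≤ r ^ s * spread (x k0) := by
    intro s
    induction s with
    | zero => simp
    | succ s ih =>
      have he : k0 + h * (s + 1) = (k0 + h * s) + h := by ring
      rw [he, hxn, ← hB]
      calc spread (B.mulVec (x (k0 + h * s))) ≤ r * spread (x (k0 + h * s)) :=
            spread_contract hBrs (by linarith) _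
        _ ≤ r * (r ^ s * spread (x k0)) := by
            exact mul_le_mul_of_nonneg_left ih (le_of_lt hr0)
        _ = r ^ (s + 1) * spread (x k0) := by ring
  have hk0sp : spread (x k0) < δ := by
    obtain ⟨a, -, ha⟩ := Finset.exists_mem_eq_sup' (Finset.univ_nonempty (α := Fin N)) (x k0)
    obtain ⟨b, -, hb⟩ := Finset.exists_mem_eq_inf' (Finset.univ_nonempty (α := Fin N)) (x k0)
    have : spread (x k0) = x k0 a - x k0 b := by rw [spread, ha, hb]
    rw [this]
    exact lt_of_le_of_lt (le_abs_self _) (hk0 a b)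
  set K := k0 + h * m with hK
  have hKsp : spread (x K) < δ / D := by
    have h1 : spread (x K) ≤ r ^ m * spread (x k0) := hgeo m
    have h2 : r ^ m * spread (x k0) ≤ (D : ℝ)⁻¹ * spread (x k0) :=
      mul_le_mul_of_nonneg_right hpow (spread_nonneg _)
    have h3 : (D : ℝ)⁻¹ * spread (x k0) < (D : ℝ)⁻¹ * δ := by
      apply mul_lt_mul_of_pos_left hk0sp (by positivity)
    calc spread (x K) ≤ r ^ m * spread (x k0) := h1
      _ ≤ (D : ℝ)⁻¹ * spread (x k0) := h2
      _ < (D : ℝ)⁻¹ * δ := h3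
      _ = δ / D := by ring
  have hcond : ∀ t, ∀ a b : Fin N, |x (K + t) a - x (K + t) b| < δ / D := by
    intro t a b
    calc |x (K + t) a - x (K + t) b| ≤ spread (x (K + t)) := abs_sub_le_spread _ a b
      _ ≤ spread (x K) := hmono K t
      _ < δ / D := hKsp
  -- counters
  have hY : ∀ s, ∀ a : Fin N, s ≤ y (K + s) a := by
    intro s
    induction s with
    | zero => intro a; omega
    | succ s ih =>
      intro a
      have he : K + (s + 1) = (K + s) + 1 := by omega
      rw [he, hy1 (K + s) a (fun j _ => hcond s a j)]
      exact Nat.succ_le_succ (ih a)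
  have hZ : ∀ s, ∀ a : Fin N, s ≤ z (K + s) a := by
    intro s
    induction s with
    | zero => intro a; omega
    | succ s ih =>
      intro a
      have he : K + (s + 1) = (K + s) + 1 := by omega
      rw [he, hz (K + s) a]
      have : (s : ℕ) ≤ (insert a (Finset.univ.filter (fun j => E a j))).inf'
          (Finset.insert_nonempty _ _) (fun j => min (z (K + s) j) (y (K + s) j)) := by
        apply Finset.le_inf'
        intro b _
        exact le_min (ih b) (hY s b)
      omega
  intro i
  exact ⟨K + (D + 1), by omega, hZ (D + 1) i⟩
end

section
/- Local ε-consensus of every individual node does not imply global ε-consensus: there exists a strongly connected digraph G, a row-stochastic matrix A compatible with G, an initial state x(0), a tolerance ε > 0, and a time k such that every node attains local ε-consensus at time k but the network does not attain global ε-consensus at time k. -/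
open Finset
open Fin.NatCast

/-- local ε-consensus of every node does not imply global
ε-consensus: a strongly connected counterexample exists. -/
theorem stmt18 :
    ∃ (N : ℕ) (E : Fin N → Fin N → Prop) (A : Matrix (Fin N) (Fin N) ℝ)
      (x0 : Fin N → ℝ) (ε : ℝ) (k : ℕ),
      (∀ i j : Fin N, i ≠ j → ∃ m, 1 ≤ m ∧ HasPath E i j m) ∧
      RowStochastic A ∧
      (∀ i j : Fin N, 0 < A i j ↔ (E i j ∨ j = i)) ∧
      0 < ε ∧
      (∀ i j : Fin N, E i j →
        |((A ^ k).mulVec x0) i - ((A ^ k).mulVec x0) j| < ε) ∧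
      ¬ (∀ i j : Fin N, |((A ^ k).mulVec x0) i - ((A ^ k).mulVec x0) j| < ε) := by

  refine ⟨4, fun i j => j = i + 1, fun i j => if j = i ∨ j = i + 1 then 1/2 else 0,
    ![0, 2/5, 4/5, 2/5], 1/2, 0, ?_, ⟨?_, ?_⟩, ?_, by norm_num, ?_, ?_⟩
  · intro i j hij
    refine ⟨(j - i).val, ?_, fun n => i + (n : Fin 4), by simp, ?_, ?_⟩
    · have h1 : j - i ≠ 0 := sub_ne_zero.mpr hij.symm
      exact Nat.one_le_iff_ne_zero.mpr (by rwa [Ne, Fin.ext_iff] at h1)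
    · simp [Fin.cast_val_eq_self]
    · intro k _
      show i + ((k+1 : ℕ) : Fin 4) = i + (k : Fin 4) + 1
      push_cast
      rw [add_assoc]
  · intro i j; dsimp only; split_ifs <;> norm_num
  · intro i
    fin_cases i <;> simp [Fin.sum_univ_four] <;> norm_num [Fin.ext_iff]
  · intro i j
    constructor
    · intro h
      by_contra hc
      push_neg at hc
      simp only [if_neg (by tauto : ¬ (j = i ∨ j = i + 1))] at h
      exact lt_irrefl 0 h
    · intro h
      show (0:ℝ) < if j = i ∨ j = i + 1 then 1/2 else 0
      rw [if_pos (by tauto)]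
      norm_num
  · intro i j hij
    subst hij
    erw [pow_zero, Matrix.one_mulVec]
    fin_cases i <;>
      norm_num [Matrix.one_mulVec, Fin.add_def, abs_lt, Matrix.cons_val_one, Matrix.head_cons]
  · intro h
    have := h 0 2
    erw [pow_zero, Matrix.one_mulVec] at this
    rw [show |(![0, 2/5, 4/5, 2/5] : Fin 4 → ℝ) 0 - ![0, 2/5, 4/5, 2/5] 2| = 4/5 by norm_num [abs, Matrix.cons_val_two]] at this
    norm_num at this
end
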